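/- Let Z² denote the ℂ-vector space of Chevalley–Eilenberg 2-cocycles c : 𝔰 × 𝔰 → ℂ for the trivial representation of 𝔰 on ℂ, and B² ⊆ Z² the subspace of 2-coboundaries. Then the linear map Z² → ℂ^{r(r−1)/2} sending c to the tuple (c(H_j, H_k))_{1 ≤ j < k ≤ r} is surjective with kernel exactly B². Consequently it induces a ℂ-linear isomorphism between the second Chevalley–Eilenberg cohomology space H²_{CE}(𝔰) = Z²/B² and ℂ^{r(r−1)/2}. -/

import Mathlib

variable {r : ℕ} {𝔰 : Type} [LieRing 𝔰] [LieAlgebra ℝ 𝔰]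

/-- The `j`-th block `𝔰_j = ℝH_j ⊕ V_j ⊕ ℝE_j` of the Pyatetskii–Shapiro decomposition. -/
def psBlock (H E : Fin r → 𝔰) (V : Fin r → Submodule ℝ 𝔰) (j : Fin r) : Submodule ℝ 𝔰 :=
  Submodule.span ℝ {H j} ⊔ V j ⊔ Submodule.span ℝ {E j}

/-- The subspace `𝔰_r ⊕ … ⊕ 𝔰_{j+1}`. -/
def psUpper (H E : Fin r → 𝔰) (V : Fin r → Submodule ℝ 𝔰) (j : Fin r) : Submodule ℝ 𝔰 :=
  ⨆ k : Fin r, ⨆ _ : j < k, psBlock H E V k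

/-- `𝔰` is a Lie algebra in Pyatetskii–Shapiro normal form of rank `r`, with data
`H_j, E_j, V_j, Ω_j`. -/
structure IsPSAlgebra (H E : Fin r → 𝔰) (V : Fin r → Submodule ℝ 𝔰)
    (Ω : Fin r → 𝔰 →ₗ[ℝ] 𝔰 →ₗ[ℝ] ℝ) : Prop where
  /-- the rank is at least one -/
  rank_pos : 0 < r
  /-- as a vector space, `𝔰` is the direct sum of the blocks `𝔰_j` … -/
  total : (⨆ j, psBlock H E V j) = ⊤
  indep : iSupIndep (psBlock H E V)
  /-- … and each block is the internal direct sum `ℝH_j ⊕ V_j ⊕ ℝE_j` -/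
  inner_indep : ∀ (j : Fin r) (a b : ℝ), ∀ v ∈ V j,
    a • H j + v + b • E j = 0 → a = 0 ∧ v = 0 ∧ b = 0
  /-- `Ω_j` is antisymmetric on `V_j` … -/
  omega_anti : ∀ j, ∀ v ∈ V j, ∀ w ∈ V j, Ω j v w = - Ω j w v
  /-- … and nondegenerate on `V_j` -/
  omega_nondeg : ∀ j, ∀ v ∈ V j, (∀ w ∈ V j, Ω j v w = 0) → v = 0
  /-- `[v, E_j] = 0` for `v ∈ V_j` -/
  lie_vE : ∀ j, ∀ v ∈ V j, ⁅v, E j⁆ = 0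
  /-- `[v, v'] = Ω_j(v, v') • E_j` for `v, v' ∈ V_j` -/
  lie_vv : ∀ j, ∀ v ∈ V j, ∀ w ∈ V j, ⁅v, w⁆ = Ω j v w • E j
  /-- `[H_j, v + z•E_j] = v + 2z•E_j` -/
  lie_H : ∀ j, ∀ v ∈ V j, ∀ z : ℝ, ⁅H j, v + z • E j⁆ = v + (2 * z) • E j
  /-- `[X, H_j] = 0` for `X ∈ 𝔰_r ⊕ … ⊕ 𝔰_{j+1}` -/
  lie_upper_H : ∀ j, ∀ X ∈ psUpper H E V j, ⁅X, H j⁆ = 0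
  /-- `[X, E_j] = 0` for `X ∈ 𝔰_r ⊕ … ⊕ 𝔰_{j+1}` -/
  lie_upper_E : ∀ j, ∀ X ∈ psUpper H E V j, ⁅X, E j⁆ = 0
  /-- `[X, V_j] ⊆ V_j` for `X ∈ 𝔰_r ⊕ … ⊕ 𝔰_{j+1}` -/
  lie_upper_V : ∀ j, ∀ X ∈ psUpper H E V j, ∀ v ∈ V j, ⁅X, v⁆ ∈ V j
  /-- `ad_X ∈ 𝔰𝔭(V_j, Ω_j)` for `X ∈ 𝔰_r ⊕ … ⊕ 𝔰_{j+1}` -/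
  omega_invar : ∀ j, ∀ X ∈ psUpper H E V j, ∀ v ∈ V j, ∀ w ∈ V j,
    Ω j ⁅X, v⁆ w + Ω j v ⁅X, w⁆ = 0

/-- `c` is a Chevalley–Eilenberg 2-cocycle on `𝔰` for the trivial representation on `ℂ`. -/
def IsCE2Cocycle (c : 𝔰 →ₗ[ℝ] 𝔰 →ₗ[ℝ] ℂ) : Prop :=
  (∀ X Y : 𝔰, c X Y = - c Y X) ∧
  (∀ X Y Z : 𝔰, c ⁅X, Y⁆ Z + c ⁅Y, Z⁆ X + c ⁅Z, X⁆ Y = 0)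

/-- `c` is a Chevalley–Eilenberg 2-coboundary on `𝔰` for the trivial representation on `ℂ`. -/
def IsCE2Coboundary (c : 𝔰 →ₗ[ℝ] 𝔰 →ₗ[ℝ] ℂ) : Prop :=
  ∃ α : 𝔰 →ₗ[ℝ] ℂ, ∀ X Y : 𝔰, c X Y = α ⁅X, Y⁆

/-!
Subtracting a suitable coboundary `dα` normalises a cocycle `c` so that it also vanishes on the
pairs `(H_k, V_k)` and `(H_k, E_k)`. A cocycle `c` with `c (H j) (H k) = 0` and these extra
zeros vanishes: since `ad H_k` has positive weights on `V_k ⊕ ℝE_k`, the cocycle identity first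
kills `c (H_j, ·)` entirely, and then makes `c` an `ad H_j`-invariant form, which vanishes on a
pair of weight vectors whose weights do not add up to zero. Conversely, the same argument
applied to `dh` for the coordinate functionals `h_m` dual to the `H_k` shows that they vanish on
`[𝔰, 𝔰]`, so the wedges `h_j ∧ h_k` are cocycles realising any prescribed values `c (H_j, H_k)`.
-/

open Set

namespace IsCE2Cocycle

variable {c d : 𝔰 →ₗ[ℝ] 𝔰 →ₗ[ℝ] ℂ}

lemma apply_self (hc : IsCE2Cocycle c) (x : 𝔰) : c x x = 0 := by
  linear_combination hc.1 x x / 2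

lemma sub (hc : IsCE2Cocycle c) (hd : IsCE2Cocycle d) : IsCE2Cocycle (c - d) := by
  refine ⟨fun x y => ?_, fun x y z => ?_⟩
  · simp only [LinearMap.sub_apply, hc.1 x y, hd.1 x y]; ring
  · simp only [LinearMap.sub_apply]
    linear_combination hc.2 x y z - hd.2 x y z

lemma smul_apply_of_lie_eq_smul (hc : IsCE2Cocycle c) {h x y : 𝔰} {a b : ℝ}
    (hx : ⁅h, x⁆ = a • x) (hy : ⁅h, y⁆ = b • y) : (a + b) • c x y = c h ⁅x, y⁆ := by
  have jacobi := hc.2 h x y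
  rw [hx, ← lie_skew y h, hy, hc.1 ⁅x, y⁆ h] at jacobi
  simp only [map_smul, map_neg, LinearMap.smul_apply, LinearMap.neg_apply] at jacobi
  rw [hc.1 y x, smul_neg, neg_neg] at jacobi
  rw [add_smul]
  linear_combination jacobi

lemma apply_eq_zero_of_forall_lt (hc : IsCE2Cocycle c) {ι : Type*} [LinearOrder ι] {H : ι → 𝔰}
    (h : ∀ j k, j < k → c (H j) (H k) = 0) (j k : ι) : c (H j) (H k) = 0 := by
  rcases lt_trichotomy j k with hjk | rfl | hjk
  · exact h j k hjk
  · exact hc.apply_self _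
  · rw [hc.1, h k j hjk, neg_zero]

end IsCE2Cocycle

lemma isCE2Cocycle_of_lie_left_eq_zero {c : 𝔰 →ₗ[ℝ] 𝔰 →ₗ[ℝ] ℂ}
    (hanti : ∀ x y, c x y = - c y x) (hlie : ∀ x y z : 𝔰, c ⁅x, y⁆ z = 0) : IsCE2Cocycle c :=
  ⟨hanti, fun x y z => by simp only [hlie, add_zero]⟩

noncomputable def ceCoboundary (α : 𝔰 →ₗ[ℝ] ℂ) : 𝔰 →ₗ[ℝ] 𝔰 →ₗ[ℝ] ℂ :=
  (LieAlgebra.ad ℝ 𝔰 : 𝔰 →ₗ[ℝ] Module.End ℝ 𝔰).compr₂ α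

@[simp]
lemma ceCoboundary_apply (α : 𝔰 →ₗ[ℝ] ℂ) (x y : 𝔰) : ceCoboundary α x y = α ⁅x, y⁆ := rfl

lemma isCE2Cocycle_ceCoboundary (α : 𝔰 →ₗ[ℝ] ℂ) : IsCE2Cocycle (ceCoboundary α) := by
  refine ⟨fun x y => by rw [ceCoboundary_apply, ceCoboundary_apply, ← lie_skew, map_neg],
    fun x y z => ?_⟩
  have jacobi : ⁅⁅x, y⁆, z⁆ + ⁅⁅y, z⁆, x⁆ + ⁅⁅z, x⁆, y⁆ = 0 := by
    rw [← lie_skew ⁅x, y⁆ z, ← lie_skew ⁅y, z⁆ x, ← lie_skew ⁅z, x⁆ y, ← neg_eq_zero,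
      ← lie_jacobi z x y]
    abel
  simp only [ceCoboundary_apply, ← map_add, jacobi, map_zero]

noncomputable def wedge (α β : 𝔰 →ₗ[ℝ] ℂ) : 𝔰 →ₗ[ℝ] 𝔰 →ₗ[ℝ] ℂ :=
  (LinearMap.mul ℝ ℂ).compl₁₂ α β - (LinearMap.mul ℝ ℂ).compl₁₂ β α

@[simp]
lemma wedge_apply (α β : 𝔰 →ₗ[ℝ] ℂ) (x y : 𝔰) : wedge α β x y = α x * β y - β x * α y := rfl

section PSStructure

variable {H E : Fin r → 𝔰} {V : Fin r → Submodule ℝ 𝔰}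

def psNilGens (E : Fin r → 𝔰) (V : Fin r → Submodule ℝ 𝔰) (k : Fin r) : Set 𝔰 :=
  insert (E k) (V k : Set 𝔰)

def psGens (H E : Fin r → 𝔰) (V : Fin r → Submodule ℝ 𝔰) : Set 𝔰 :=
  ⋃ k, insert (H k) (psNilGens E V k)

lemma H_mem_psGens (k : Fin r) : H k ∈ psGens H E V :=
  mem_iUnion_of_mem k (mem_insert _ _)

lemma psNilGens_subset_psGens (k : Fin r) : psNilGens E V k ⊆ psGens H E V :=
  fun _ hy => mem_iUnion_of_mem k (mem_insert_of_mem _ hy)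

lemma psBlock_le_psUpper {j k : Fin r} (hjk : j < k) : psBlock H E V k ≤ psUpper H E V j :=
  le_iSup₂_of_le k hjk le_rfl

lemma H_mem_psUpper {j k : Fin r} (hjk : j < k) : H k ∈ psUpper H E V j :=
  psBlock_le_psUpper hjk <| le_sup_left (a := Submodule.span ℝ {H k} ⊔ V k) <|
    Submodule.mem_sup_left (Submodule.mem_span_singleton_self _)

lemma psNilGens_subset_psUpper {j k : Fin r} (hjk : j < k) :
    psNilGens E V k ⊆ psUpper H E V j := by
  rintro y (rfl | hy)
  · exact psBlock_le_psUpper hjk <| Submodule.mem_sup_right (Submodule.mem_span_singleton_self _)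
  · exact psBlock_le_psUpper hjk <| Submodule.mem_sup_left (Submodule.mem_sup_right hy)

variable {Ω : Fin r → 𝔰 →ₗ[ℝ] 𝔰 →ₗ[ℝ] ℝ}

namespace IsPSAlgebra

variable (P : IsPSAlgebra H E V Ω)
include P

lemma span_psGens : Submodule.span ℝ (psGens H E V) = ⊤ := by
  refine eq_top_iff.mpr (P.total ▸ iSup_le fun k => ?_)
  refine sup_le (sup_le ?_ fun v hv => ?_) ?_
  · exact Submodule.span_mono (singleton_subset_iff.mpr (H_mem_psGens k))
  · exact Submodule.subset_span (psNilGens_subset_psGens k (mem_insert_of_mem _ hv))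
  · exact Submodule.span_mono
      (singleton_subset_iff.mpr (psNilGens_subset_psGens k (mem_insert _ _)))

lemma lie_H_of_mem_psUpper {j : Fin r} {x : 𝔰} (hx : x ∈ psUpper H E V j) : ⁅H j, x⁆ = 0 := by
  rw [← lie_skew, P.lie_upper_H j x hx, neg_zero]

lemma lie_H_H (j k : Fin r) : ⁅H j, H k⁆ = 0 := by
  rcases lt_trichotomy j k with hjk | rfl | hjk
  · exact P.lie_H_of_mem_psUpper (H_mem_psUpper hjk)
  · exact lie_self _
  · exact P.lie_upper_H k _ (H_mem_psUpper hjk)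

lemma lie_H_E (k : Fin r) : ⁅H k, E k⁆ = (2 : ℝ) • E k := by
  simpa using P.lie_H k 0 (Submodule.zero_mem _) 1

lemma lie_H_of_mem_V {k : Fin r} {v : 𝔰} (hv : v ∈ V k) : ⁅H k, v⁆ = v := by
  simpa using P.lie_H k v hv 0

lemma exists_pos_lie_H_eq_smul {k : Fin r} {y : 𝔰} (hy : y ∈ psNilGens E V k) :
    ∃ b : ℝ, 0 < b ∧ ⁅H k, y⁆ = b • y := by
  rcases hy with rfl | hy
  · exact ⟨2, two_pos, P.lie_H_E k⟩
  · exact ⟨1, one_pos, by rw [P.lie_H_of_mem_V hy, one_smul]⟩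

lemma exists_nonneg_lie_H_eq_smul {j k : Fin r} (hjk : j ≤ k) {y : 𝔰}
    (hy : y ∈ psNilGens E V k) : ∃ b : ℝ, 0 ≤ b ∧ ⁅H j, y⁆ = b • y := by
  rcases hjk.lt_or_eq with hjk | rfl
  · exact ⟨0, le_rfl, by rw [P.lie_H_of_mem_psUpper (psNilGens_subset_psUpper hjk hy), zero_smul]⟩
  · obtain ⟨b, hb, hby⟩ := P.exists_pos_lie_H_eq_smul hy
    exact ⟨b, hb.le, hby⟩

lemma lie_H_mem_span_psNilGens (j : Fin r) {k : Fin r} {y : 𝔰} (hy : y ∈ psNilGens E V k) :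
    ⁅H j, y⁆ ∈ Submodule.span ℝ (psNilGens E V k) := by
  rcases le_or_gt j k with hjk | hkj
  · obtain ⟨b, -, hby⟩ := P.exists_nonneg_lie_H_eq_smul hjk hy
    exact hby ▸ Submodule.smul_mem _ b (Submodule.subset_span hy)
  · rcases hy with rfl | hy
    · exact P.lie_upper_E k _ (H_mem_psUpper hkj) ▸ Submodule.zero_mem _
    · exact Submodule.subset_span
        (mem_insert_of_mem _ (P.lie_upper_V k _ (H_mem_psUpper hkj) y hy))

end IsPSAlgebra

end PSStructure

section Extension

variable {H E : Fin r → 𝔰} {V : Fin r → Submodule ℝ 𝔰} {Ω : Fin r → 𝔰 →ₗ[ℝ] 𝔰 →ₗ[ℝ] ℝ}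

noncomputable def psSum (H E : Fin r → 𝔰) (V : Fin r → Submodule ℝ 𝔰) :
    (Fin r → ℝ) × ((j : Fin r) → V j) × (Fin r → ℝ) →ₗ[ℝ] 𝔰 :=
  (Fintype.linearCombination ℝ H).coprod
    ((∑ j, (V j).subtype ∘ₗ LinearMap.proj j).coprod (Fintype.linearCombination ℝ E))

lemma psSum_apply (a : Fin r → ℝ) (v : (j : Fin r) → V j) (b : Fin r → ℝ) :
    psSum H E V (a, v, b) = ∑ j, (a j • H j + v j + b j • E j) := by
  simp [psSum, Fintype.linearCombination_apply, Finset.sum_add_distrib, add_assoc]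

lemma IsPSAlgebra.psSum_injective (P : IsPSAlgebra H E V Ω) :
    Function.Injective (psSum H E V) := by
  refine (injective_iff_map_eq_zero _).mpr ?_
  rintro ⟨a, v, b⟩ h
  rw [psSum_apply] at h
  have hblock := (iSupIndep_iff_finsetSum_eq_zero_imp_eq_zero _).mp P.indep Finset.univ _
    (fun j _ => Submodule.add_mem_sup (Submodule.add_mem_sup
      (Submodule.smul_mem _ (a j) (Submodule.mem_span_singleton_self _)) (v j).2)
      (Submodule.smul_mem _ (b j) (Submodule.mem_span_singleton_self _))) h
  have hzero := fun j => P.inner_indep j (a j) (b j) (v j) (v j).2 (hblock j (Finset.mem_univ j))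
  simp only [Prod.mk_eq_zero]
  exact ⟨funext fun j => (hzero j).1, funext fun j => Subtype.ext (hzero j).2.1,
    funext fun j => (hzero j).2.2⟩

lemma IsPSAlgebra.exists_linearMap (P : IsPSAlgebra H E V Ω) (a b : Fin r → ℂ)
    (ψ : Fin r → 𝔰 →ₗ[ℝ] ℂ) :
    ∃ α : 𝔰 →ₗ[ℝ] ℂ,
      (∀ j, α (H j) = a j) ∧ (∀ j, ∀ v ∈ V j, α v = ψ j v) ∧ ∀ j, α (E j) = b j := by
  classical
  obtain ⟨g, hg⟩ := (psSum H E V).exists_leftInverse_of_injective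
    (LinearMap.ker_eq_bot.mpr P.psSum_injective)
  let Ψ : (Fin r → ℝ) × ((j : Fin r) → V j) × (Fin r → ℝ) →ₗ[ℝ] ℂ :=
    (Fintype.linearCombination ℝ a).coprod
      ((∑ j, ψ j ∘ₗ (V j).subtype ∘ₗ LinearMap.proj j).coprod (Fintype.linearCombination ℝ b))
  have hΨ : ∀ p, (Ψ ∘ₗ g) (psSum H E V p) = Ψ p := fun p => by
    rw [LinearMap.comp_apply, ← LinearMap.comp_apply g, hg, LinearMap.id_apply]
  refine ⟨Ψ ∘ₗ g, fun j => ?_, fun j v hv => ?_, fun j => ?_⟩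
  · have := hΨ (Pi.single j 1, 0, 0)
    simpa [psSum_apply, Ψ, Fintype.linearCombination_apply_single] using this
  · have hsingle : ∀ (φ : 𝔰 →ₗ[ℝ] ℂ) (k : Fin r),
        φ (Pi.single (M := fun k => V k) j ⟨v, hv⟩ k) = if k = j then φ v else 0 := by
      intro φ k
      split_ifs with hk
      · subst hk; rw [Pi.single_eq_same]
      · rw [Pi.single_eq_of_ne hk, Submodule.coe_zero, map_zero]
    have := hΨ (0, Pi.single j ⟨v, hv⟩, 0)
    simpa [psSum_apply, Ψ, hsingle] using this
  · have := hΨ (0, 0, Pi.single j 1)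
    simpa [psSum_apply, Ψ, Fintype.linearCombination_apply_single] using this

end Extension

section Cohomology

variable {H E : Fin r → 𝔰} {V : Fin r → Submodule ℝ 𝔰} {Ω : Fin r → 𝔰 →ₗ[ℝ] 𝔰 →ₗ[ℝ] ℝ}
  {c : 𝔰 →ₗ[ℝ] 𝔰 →ₗ[ℝ] ℂ}

namespace IsPSAlgebra

variable (P : IsPSAlgebra H E V Ω)
include P

lemma isCE2Cocycle_eq_zero (hc : IsCE2Cocycle c)
    (hHH : ∀ j k, c (H j) (H k) = 0) (hHN : ∀ k, ∀ y ∈ psNilGens E V k, c (H k) y = 0) :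
    c = 0 := by
  have hH : ∀ j, c (H j) = 0 := by
    intro j
    refine LinearMap.ext_on P.span_psGens fun x hx => ?_
    obtain ⟨k, hx⟩ := mem_iUnion.mp hx
    rcases hx with rfl | hx
    · exact hHH j k
    obtain ⟨b, hb, hbx⟩ := P.exists_pos_lie_H_eq_smul hx
    have hspan : c (H k) ⁅H j, x⁆ = 0 :=
      LinearMap.eqOn_span (R := ℝ) (g := 0) (hHN k) (P.lie_H_mem_span_psNilGens j hx)
    have := hc.smul_apply_of_lie_eq_smul (a := 0) (by rw [P.lie_H_H k j, zero_smul]) hbx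
    rw [zero_add, hspan] at this
    exact (smul_eq_zero.mp this).resolve_left hb.ne'
  have hNN : ∀ j k, j ≤ k → ∀ x ∈ psNilGens E V j, ∀ y ∈ psNilGens E V k, c x y = 0 := by
    intro j k hjk x hx y hy
    obtain ⟨a, ha, hax⟩ := P.exists_pos_lie_H_eq_smul hx
    obtain ⟨b, hb, hby⟩ := P.exists_nonneg_lie_H_eq_smul hjk hy
    have := hc.smul_apply_of_lie_eq_smul hax hby
    rw [hH j, LinearMap.zero_apply] at this
    exact (smul_eq_zero.mp this).resolve_left (by positivity)
  refine LinearMap.ext_on P.span_psGens fun x hx => LinearMap.ext_on P.span_psGens fun y hy => ?_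
  obtain ⟨j, hx⟩ := mem_iUnion.mp hx
  obtain ⟨k, hy⟩ := mem_iUnion.mp hy
  rcases hx with rfl | hx
  · simp [hH]
  rcases hy with rfl | hy
  · simp [hc.1 x, hH]
  rcases le_total j k with hjk | hkj
  · simpa using hNN j k hjk x hx y hy
  · simpa [hc.1 x y] using hNN k j hkj y hy x hx

lemma isCE2Coboundary_of_apply_H_H (hc : IsCE2Cocycle c)
    (h : ∀ j k, j < k → c (H j) (H k) = 0) : IsCE2Coboundary c := by
  obtain ⟨α, hαH, hαV, hαE⟩ :=
    P.exists_linearMap 0 (fun j => c (H j) (E j) / 2) (fun j => c (H j))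
  have hzero := P.isCE2Cocycle_eq_zero (hc.sub (isCE2Cocycle_ceCoboundary α))
    (fun j k => by simp [hc.apply_eq_zero_of_forall_lt h, P.lie_H_H])
    (fun k y hy => ?_)
  · exact ⟨α, fun x y => by simpa [sub_eq_zero] using congr($hzero x y)⟩
  rcases hy with rfl | hy
  · simp only [LinearMap.sub_apply, ceCoboundary_apply, P.lie_H_E, map_smul, hαE,
      Complex.real_smul]
    push_cast
    ring
  · simp [P.lie_H_of_mem_V hy, hαV k y hy]

lemma exists_dual_H : ∃ h : Fin r → 𝔰 →ₗ[ℝ] ℂ,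
    (∀ m k, h m (H k) = if k = m then 1 else 0) ∧ ∀ m (x y : 𝔰), h m ⁅x, y⁆ = 0 := by
  choose h hH hV hE using
    fun m : Fin r => P.exists_linearMap (fun k => if k = m then 1 else 0) 0 0
  refine ⟨h, hH, fun m x y => ?_⟩
  have hzero := P.isCE2Cocycle_eq_zero (isCE2Cocycle_ceCoboundary (h m))
    (fun j k => by simp [P.lie_H_H]) (fun k y hy => ?_)
  · simpa using congr($hzero x y)
  obtain ⟨b, -, hby⟩ := P.exists_pos_lie_H_eq_smul hy
  rcases hy with rfl | hy
  · simp [hby, hE]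
  · simp [hby, hV m k y hy]

lemma exists_isCE2Cocycle_apply_H_H (f : Fin r → Fin r → ℂ) :
    ∃ c : 𝔰 →ₗ[ℝ] 𝔰 →ₗ[ℝ] ℂ, IsCE2Cocycle c ∧ ∀ j k, j < k → c (H j) (H k) = f j k := by
  classical
  obtain ⟨h, hH, hlie⟩ := P.exists_dual_H
  let pairs := Finset.univ.filter fun p : Fin r × Fin r => p.1 < p.2
  refine ⟨∑ p ∈ pairs, f p.1 p.2 • wedge (h p.1) (h p.2),
    isCE2Cocycle_of_lie_left_eq_zero (fun x y => ?_) (fun x y z => ?_), fun j k hjk => ?_⟩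
  · simp only [LinearMap.sum_apply, LinearMap.smul_apply, wedge_apply,
      ← Finset.sum_neg_distrib]
    exact Finset.sum_congr rfl fun p _ => by ring
  · simp [hlie]
  · simp only [LinearMap.sum_apply, LinearMap.smul_apply, wedge_apply, hH]
    rw [Finset.sum_eq_single (j, k)]
    · simp [hjk.ne']
    · rintro ⟨a, b⟩ hab hne
      have hab : a < b := (Finset.mem_filter.mp hab).2
      split_ifs <;> subst_vars <;> simp_all [lt_asymm hab]
    · simp [pairs, hjk]

end IsPSAlgebra

end Cohomology

theorem statement11_general {r : ℕ} (𝔰 : Type) [LieRing 𝔰] [LieAlgebra ℝ 𝔰]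
    (H E : Fin r → 𝔰) (V : Fin r → Submodule ℝ 𝔰) (Ω : Fin r → 𝔰 →ₗ[ℝ] 𝔰 →ₗ[ℝ] ℝ)
    (P : IsPSAlgebra H E V Ω) :
    -- surjectivity: every family `(f j k)_{j<k}` is attained by some 2-cocycle …
    (∀ f : Fin r → Fin r → ℂ, ∃ c : 𝔰 →ₗ[ℝ] 𝔰 →ₗ[ℝ] ℂ, IsCE2Cocycle c ∧
      ∀ j k : Fin r, j < k → c (H j) (H k) = f j k) ∧
    -- … and the kernel consists exactly of the 2-coboundaries:
    (∀ c : 𝔰 →ₗ[ℝ] 𝔰 →ₗ[ℝ] ℂ, IsCE2Cocycle c →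
      (IsCE2Coboundary c ↔ ∀ j k : Fin r, j < k → c (H j) (H k) = 0)) := by
  refine ⟨P.exists_isCE2Cocycle_apply_H_H, fun c hc => ⟨?_, P.isCE2Coboundary_of_apply_H_H hc⟩⟩
  rintro ⟨α, hα⟩ j k -
  rw [hα, P.lie_H_H, map_zero]

/-- The map `Z² → ℂ^{r(r−1)/2}`, `c ↦ (c(H_j, H_k))_{j<k}`, is surjective
with kernel exactly the space `B²` of 2-coboundaries; hence it induces an isomorphism
`H²_CE(𝔰) ≃ ℂ^{r(r−1)/2}`. -/
theorem statement11 {r : ℕ} (𝔰 : Type) [LieRing 𝔰] [LieAlgebra ℝ 𝔰] [Module.Finite ℝ 𝔰]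
    (H E : Fin r → 𝔰) (V : Fin r → Submodule ℝ 𝔰) (Ω : Fin r → 𝔰 →ₗ[ℝ] 𝔰 →ₗ[ℝ] ℝ)
    (P : IsPSAlgebra H E V Ω) :
    -- surjectivity: every family `(f j k)_{j<k}` is attained by some 2-cocycle …
    (∀ f : Fin r → Fin r → ℂ, ∃ c : 𝔰 →ₗ[ℝ] 𝔰 →ₗ[ℝ] ℂ, IsCE2Cocycle c ∧
      ∀ j k : Fin r, j < k → c (H j) (H k) = f j k) ∧
    -- … and the kernel consists exactly of the 2-coboundaries:
    (∀ c : 𝔰 →ₗ[ℝ] 𝔰 →ₗ[ℝ] ℂ, IsCE2Cocycle c →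
      (IsCE2Coboundary c ↔ ∀ j k : Fin r, j < k → c (H j) (H k) = 0)) :=
  statement11_general 𝔰 H E V Ω P
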